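/- For the graphs G_n(f) defined from the square with corner points p₁ and p₅, the corner-to-corner resistance is monotone in n: R_{(G_n(f),E_n(f))}(p₁,p₅) ≤ R_{(G_{n+1}(f),E_{n+1}(f))}(p₁,p₅) for all n ≥ 0 and all f:ℕ→{0,1}. -/

import Mathlib

open scoped ENNReal

/-- The nine reference points `p₀, …, p₈` of the square `[-1/2,1/2]²` in `ℂ`. -/
noncomputable def pt : ℕ → ℂ
  | 1 => -(1 / 2) - Complex.I / 2
  | 2 => -(Complex.I / 2)
  | 3 => 1 / 2 - Complex.I / 2
  | 4 => 1 / 2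
  | 5 => 1 / 2 + Complex.I / 2
  | 6 => Complex.I / 2
  | 7 => -(1 / 2) + Complex.I / 2
  | 8 => -(1 / 2)
  | _ => 0

/-- The contraction `φ_j(z) = (z - p_j)/3 + p_j`. -/
noncomputable def phi (j : ℕ) (z : ℂ) : ℂ := (z - pt j) / 3 + pt j

/-- The vertex sets `G_n(f)`: a Vicsek-type level when `f n = 0` and a
Sierpiński-carpet-type level when `f n = 1`. -/
noncomputable def Gn (f : ℕ → ℕ) : ℕ → Set ℂ
  | 0 => {pt 0, pt 1, pt 3, pt 5, pt 7}
  | n + 1 =>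
      if f (n + 1) = 0 then ⋃ j ∈ ({0, 1, 3, 5, 7} : Set ℕ), phi j '' Gn f n
      else ⋃ j ∈ ({1, 2, 3, 4, 5, 6, 7, 8} : Set ℕ), phi j '' Gn f n

/-- The edge set `E_n(f)`: pairs of points of `G_n(f)` at Euclidean distance
`3⁻ⁿ · 2^{-1/2}`. -/
noncomputable def En (f : ℕ → ℕ) (n : ℕ) : Set (ℂ × ℂ) :=
  {q | q.1 ∈ Gn f n ∧ q.2 ∈ Gn f n ∧
    ‖q.1 - q.2‖ = (3 : ℝ) ^ (-(n : ℤ)) / Real.sqrt 2}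

/-- Energy `(1/2) Σ_{(x,y) ∈ Ed} (g x - g y)²` with simple (unit) weights. -/
noncomputable def edgeEnergy (Ed : Set (ℂ × ℂ)) (g : ℂ → ℝ) : ℝ≥0∞ :=
  (1 / 2) * ∑' e : Ed, ENNReal.ofReal ((g (e : ℂ × ℂ).1 - g (e : ℂ × ℂ).2) ^ 2)

/-- Effective resistance `R(A,B) = (inf { energy g : g ≡ 1 on A, g ≡ 0 on B })⁻¹`. -/
noncomputable def edgeRes (Ed : Set (ℂ × ℂ)) (A B : Set ℂ) : ℝ≥0∞ :=
  (⨅ (g : ℂ → ℝ) (_ : (∀ a ∈ A, g a = 1) ∧ (∀ b ∈ B, g b = 0)), edgeEnergy Ed g)⁻¹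

/-!
Given an admissible potential `h` on level `n`, first replace it by `(h + 1 - h ∘ σ) / 2`, where
`σ` is the reflection swapping `p₁` and `p₅`. Since `σ` preserves `E_n(f)`, convexity of the energy
shows this does not raise the energy, and the new potential equals `1/2` on the fixed line of `σ`.
On level `n + 1` use it through `φ₁⁻¹` on `{re z + im z ≤ -2/3}`, through `φ₅⁻¹` on
`{re z + im z ≥ 2/3}`, and put `1/2` in between. The maps `φ₁⁻¹`, `φ₅⁻¹` send the edges inside these
two corner regions injectively to edges of `E_n(f)` in the halves `re z + im z ≤ 0` and `≥ 0`, which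
overlap only where the potential is flat. Every other edge carries no energy: `re z + im z` takes
values in `3^-(n+1) ℤ` on `G_{n+1}(f)`, so an edge leaving a corner region starts on its boundary
line, where the potential is already `1/2`.
-/

open Set

section Energy

variable {Ed Ed' : Set (ℂ × ℂ)} {g g' : ℂ → ℝ}

lemma edgeEnergy_mono (h : Ed ⊆ Ed') (g : ℂ → ℝ) : edgeEnergy Ed g ≤ edgeEnergy Ed' g := by
  unfold edgeEnergy
  gcongr
  exact ENNReal.tsum_mono_subtype (fun e : ℂ × ℂ => ENNReal.ofReal ((g e.1 - g e.2) ^ 2)) h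

lemma edgeEnergy_union_le (Ed Ed' : Set (ℂ × ℂ)) (g : ℂ → ℝ) :
    edgeEnergy (Ed ∪ Ed') g ≤ edgeEnergy Ed g + edgeEnergy Ed' g := by
  rw [edgeEnergy, edgeEnergy, edgeEnergy, ← mul_add]
  gcongr
  exact ENNReal.tsum_union_le (fun e : ℂ × ℂ => ENNReal.ofReal ((g e.1 - g e.2) ^ 2)) _ _

lemma edgeEnergy_union_of_disjoint (h : Disjoint Ed Ed') (g : ℂ → ℝ) :
    edgeEnergy (Ed ∪ Ed') g = edgeEnergy Ed g + edgeEnergy Ed' g := by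
  rw [edgeEnergy, edgeEnergy, edgeEnergy, ← mul_add,
    ENNReal.summable.tsum_union_disjoint
      (f := fun e : ℂ × ℂ => ENNReal.ofReal ((g e.1 - g e.2) ^ 2)) h ENNReal.summable]

lemma edgeEnergy_congr (h : ∀ e ∈ Ed, (g e.1 - g e.2) ^ 2 = (g' e.1 - g' e.2) ^ 2) :
    edgeEnergy Ed g = edgeEnergy Ed g' := by
  unfold edgeEnergy
  congr 1
  exact tsum_congr fun e => by rw [h e e.2]

lemma edgeEnergy_inter_of_flat (S : Set (ℂ × ℂ)) (h : ∀ e ∈ Ed, e ∉ S → g e.1 = g e.2) :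
    edgeEnergy (Ed ∩ S) g = edgeEnergy Ed g := by
  have hzero : edgeEnergy (Ed \ S) g = 0 := by
    simp only [edgeEnergy, mul_eq_zero, ENNReal.tsum_eq_zero, Subtype.forall, mem_sdiff]
    exact Or.inr fun e he => by simp [h e he.1 he.2]
  conv_rhs => rw [← inter_union_sdiff Ed S,
    edgeEnergy_union_of_disjoint disjoint_sdiff_inter.symm, hzero, add_zero]

lemma edgeEnergy_comp_le {T : ℂ → ℂ} (hT : Function.Injective T)
    (hmaps : MapsTo (Prod.map T T) Ed Ed') (g : ℂ → ℝ) :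
    edgeEnergy Ed (g ∘ T) ≤ edgeEnergy Ed' g := by
  unfold edgeEnergy
  gcongr
  calc ∑' e : Ed, ENNReal.ofReal ((g (T e.1.1) - g (T e.1.2)) ^ 2)
      = ∑' e : Prod.map T T '' Ed, ENNReal.ofReal ((g e.1.1 - g e.1.2) ^ 2) :=
        (tsum_image (fun e : ℂ × ℂ => ENNReal.ofReal ((g e.1 - g e.2) ^ 2))
          (hT.prodMap hT).injOn).symm
    _ ≤ ∑' e : Ed', ENNReal.ofReal ((g e.1.1 - g e.1.2) ^ 2) :=
        ENNReal.tsum_mono_subtype (fun e : ℂ × ℂ => ENNReal.ofReal ((g e.1 - g e.2) ^ 2))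
          hmaps.image_subset

lemma edgeEnergy_const_sub (Ed : Set (ℂ × ℂ)) (c : ℝ) (g : ℂ → ℝ) :
    edgeEnergy Ed (fun z => c - g z) = edgeEnergy Ed g :=
  edgeEnergy_congr fun e _ => by ring

lemma edgeEnergy_midpoint_le (Ed : Set (ℂ × ℂ)) (g g' : ℂ → ℝ) :
    edgeEnergy Ed (fun z => (g z + g' z) / 2) ≤ (edgeEnergy Ed g + edgeEnergy Ed g') / 2 := by
  have hpt : ∀ e : ℂ × ℂ, ENNReal.ofReal (((g e.1 + g' e.1) / 2 - (g e.2 + g' e.2) / 2) ^ 2) ≤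
      (ENNReal.ofReal ((g e.1 - g e.2) ^ 2) + ENNReal.ofReal ((g' e.1 - g' e.2) ^ 2)) / 2 := by
    intro e
    rw [← ENNReal.ofReal_add (sq_nonneg _) (sq_nonneg _), ← ENNReal.ofReal_ofNat 2,
      ← ENNReal.ofReal_div_of_pos two_pos]
    gcongr
    nlinarith [sq_nonneg (g e.1 - g e.2 - (g' e.1 - g' e.2))]
  unfold edgeEnergy
  calc 1 / 2 * ∑' e : Ed, ENNReal.ofReal (((g e.1.1 + g' e.1.1) / 2 - (g e.1.2 + g' e.1.2) / 2) ^ 2)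
      ≤ 1 / 2 * ∑' e : Ed, (ENNReal.ofReal ((g e.1.1 - g e.1.2) ^ 2) +
          ENNReal.ofReal ((g' e.1.1 - g' e.1.2) ^ 2)) / 2 := by
        gcongr with e
        exact hpt e
    _ = _ := by simp_rw [div_eq_mul_inv, ENNReal.tsum_mul_right, ENNReal.tsum_add]; ring

lemma edgeEnergy_inter_add_inter_le {S S' : Set (ℂ × ℂ)}
    (h : ∀ e ∈ Ed ∩ S ∩ S', g e.1 = g e.2) :
    edgeEnergy (Ed ∩ S) g + edgeEnergy (Ed ∩ S') g ≤ edgeEnergy Ed g := by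
  have hflat : edgeEnergy (Ed ∩ S' ∩ Sᶜ) g = edgeEnergy (Ed ∩ S') g :=
    edgeEnergy_inter_of_flat _ fun e he heS => h e ⟨⟨he.1, not_not.mp heS⟩, he.2⟩
  rw [← hflat, ← edgeEnergy_union_of_disjoint]
  · exact edgeEnergy_mono
      (union_subset inter_subset_left (inter_subset_left.trans inter_subset_left)) g
  · exact disjoint_left.mpr fun e he he' => he'.2 he.2

lemma edgeEnergy_symmetrize_le {σ : ℂ → ℂ} (hσ : Function.Injective σ)
    (hmaps : MapsTo (Prod.map σ σ) Ed Ed) (c : ℝ) (g : ℂ → ℝ) :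
    edgeEnergy Ed (fun z => (g z + (c - g (σ z))) / 2) ≤ edgeEnergy Ed g :=
  calc edgeEnergy Ed (fun z => (g z + (c - g (σ z))) / 2)
      ≤ (edgeEnergy Ed g + edgeEnergy Ed (fun z => c - (g ∘ σ) z)) / 2 :=
        edgeEnergy_midpoint_le Ed g _
    _ ≤ (edgeEnergy Ed g + edgeEnergy Ed g) / 2 := by
        rw [edgeEnergy_const_sub]
        gcongr
        exact edgeEnergy_comp_le hσ hmaps g
    _ = edgeEnergy Ed g := by rw [ENNReal.add_div, ENNReal.add_halves]

end Energy

lemma edgeRes_le_edgeRes {Ed Ed' : Set (ℂ × ℂ)} {A B A' B' : Set ℂ}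
    (h : ∀ g : ℂ → ℝ, (∀ a ∈ A, g a = 1) → (∀ b ∈ B, g b = 0) →
      ∃ g' : ℂ → ℝ, (∀ a ∈ A', g' a = 1) ∧ (∀ b ∈ B', g' b = 0) ∧
        edgeEnergy Ed' g' ≤ edgeEnergy Ed g) :
    edgeRes Ed A B ≤ edgeRes Ed' A' B' := by
  refine ENNReal.inv_le_inv.mpr (le_iInf₂ fun g hg => ?_)
  obtain ⟨g', hA, hB, hle⟩ := h g hg.1 hg.2
  exact (iInf₂_le g' ⟨hA, hB⟩).trans hle

def diagCoord (z : ℂ) : ℝ := z.re + z.im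

noncomputable def phiInv (j : ℕ) (z : ℂ) : ℂ := 3 * z - 2 * pt j

lemma diagCoord_phi (j : ℕ) (w : ℂ) :
    diagCoord (phi j w) = diagCoord w / 3 + 2 * diagCoord (pt j) / 3 := by
  simp only [diagCoord, phi, Complex.add_re, Complex.add_im, Complex.sub_re, Complex.sub_im,
    Complex.div_ofNat_re, Complex.div_ofNat_im]
  ring

lemma diagCoord_phiInv (j : ℕ) (z : ℂ) :
    diagCoord (phiInv j z) = 3 * diagCoord z - 2 * diagCoord (pt j) := by
  simp [diagCoord, phiInv]
  ring

lemma phiInv_phi (j : ℕ) (w : ℂ) : phiInv j (phi j w) = w := by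
  simp only [phiInv, phi]
  ring

lemma diagCoord_pt_one : diagCoord (pt 1) = -1 := by norm_num [diagCoord, pt]

lemma diagCoord_pt_five : diagCoord (pt 5) = 1 := by norm_num [diagCoord, pt]

lemma phi_pt_self (j : ℕ) : phi j (pt j) = pt j := by simp [phi]

lemma phiInv_pt_self (j : ℕ) : phiInv j (pt j) = pt j := by
  simp only [phiInv]
  ring

lemma norm_phiInv_sub (j : ℕ) (a b : ℂ) : ‖phiInv j a - phiInv j b‖ = 3 * ‖a - b‖ := by
  rw [show phiInv j a - phiInv j b = 3 * (a - b) by simp only [phiInv]; ring, norm_mul]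
  norm_num

lemma phiInv_injective (j : ℕ) : Function.Injective (phiInv j) := fun a b h => by
  simpa [phiInv] using h

lemma abs_diagCoord_sub_le (a b : ℂ) : |diagCoord a - diagCoord b| ≤ √2 * ‖a - b‖ := by
  have h : (diagCoord a - diagCoord b) ^ 2 ≤ (√2 * ‖a - b‖) ^ 2 := by
    rw [mul_pow, Real.sq_sqrt zero_le_two, Complex.sq_norm, Complex.normSq_apply]
    simp only [diagCoord, Complex.sub_re, Complex.sub_im]
    nlinarith [sq_nonneg (a.re - b.re - (a.im - b.im))]
  exact abs_le_of_sq_le_sq h (by positivity)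

lemma exists_int_two_mul_diagCoord_pt (j : ℕ) : ∃ m : ℤ, 2 * diagCoord (pt j) = m := by
  match j with
  | 0 => exact ⟨0, by simp [diagCoord, pt]⟩
  | 1 => exact ⟨-2, by norm_num [diagCoord, pt]⟩
  | 2 => exact ⟨-1, by norm_num [diagCoord, pt]⟩
  | 3 => exact ⟨0, by norm_num [diagCoord, pt]⟩
  | 4 => exact ⟨1, by norm_num [diagCoord, pt]⟩
  | 5 => exact ⟨2, by norm_num [diagCoord, pt]⟩
  | 6 => exact ⟨1, by norm_num [diagCoord, pt]⟩
  | 7 => exact ⟨0, by norm_num [diagCoord, pt]⟩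
  | 8 => exact ⟨-1, by norm_num [diagCoord, pt]⟩
  | _ + 9 => exact ⟨0, by simp [diagCoord, pt]⟩

/-- The reflection `x + iy ↦ -y - ix` in the line `diagCoord = 0`; it swaps `p₁` and `p₅`. -/
noncomputable def mirror (z : ℂ) : ℂ := -Complex.I * starRingEnd ℂ z

def mirrorIdx : ℕ → ℕ
  | 1 => 5
  | 2 => 4
  | 4 => 2
  | 5 => 1
  | 6 => 8
  | 8 => 6
  | j => j

lemma mirror_mirror (z : ℂ) : mirror (mirror z) = z := by
  apply Complex.ext <;> simp [mirror]

lemma mirror_injective : Function.Injective mirror :=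
  Function.LeftInverse.injective mirror_mirror

lemma norm_mirror_sub (a b : ℂ) : ‖mirror a - mirror b‖ = ‖a - b‖ := by
  rw [show mirror a - mirror b = -Complex.I * starRingEnd ℂ (a - b) by
      simp only [mirror, map_sub]; ring,
    norm_mul, Complex.norm_conj]
  simp

lemma diagCoord_mirror (z : ℂ) : diagCoord (mirror z) = -diagCoord z := by
  simp [diagCoord, mirror]

lemma mirror_eq_self {z : ℂ} (h : diagCoord z = 0) : mirror z = z := by
  have him : z.im = -z.re := by rw [diagCoord] at h; linarith
  apply Complex.ext <;> simp [mirror, him]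

lemma mirror_pt (j : ℕ) : mirror (pt j) = pt (mirrorIdx j) := by
  match j with
  | 0 | 1 | 2 | 3 | 4 | 5 | 6 | 7 | 8 =>
    apply Complex.ext <;> norm_num [mirror, pt, mirrorIdx, Complex.div_re, Complex.div_im]
  | _ + 9 => simp [mirror, pt, mirrorIdx]

lemma mirror_phi (j : ℕ) (w : ℂ) : mirror (phi j w) = phi (mirrorIdx j) (mirror w) := by
  rw [phi, phi, ← mirror_pt]
  simp only [mirror, map_add, map_sub, map_div₀, map_ofNat]
  ring

lemma mirror_phiInv (j : ℕ) (z : ℂ) : mirror (phiInv j z) = phiInv (mirrorIdx j) (mirror z) := by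
  rw [phiInv, phiInv, ← mirror_pt]
  simp only [mirror, map_sub, map_mul, map_ofNat]
  ring

lemma eq_of_le_of_lt_of_sub_le_of_int {s x y L : ℝ} (hs : 0 < s) (hx : ∃ k : ℤ, x * s = k)
    (hy : ∃ k : ℤ, y * s = k) (hL : ∃ k : ℤ, L * s = k) (hxL : x ≤ L) (hLy : L < y)
    (hyx : y - x ≤ s⁻¹) : x = L := by
  obtain ⟨kx, hkx⟩ := hx
  obtain ⟨ky, hky⟩ := hy
  obtain ⟨kL, hkL⟩ := hL
  have h1 : (kx : ℝ) ≤ kL := by rw [← hkx, ← hkL]; gcongr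
  have h2 : (kL : ℝ) < ky := by rw [← hkL, ← hky]; gcongr
  have h3 : (ky : ℝ) ≤ kx + 1 := by
    rw [← hkx, ← hky]
    have := mul_le_mul_of_nonneg_right hyx hs.le
    rw [inv_mul_cancel₀ hs.ne'] at this
    linarith
  have hk : kx = kL := by
    have : kx ≤ kL := by exact_mod_cast h1
    have : kL < ky := by exact_mod_cast h2
    have : ky ≤ kx + 1 := by exact_mod_cast h3
    omega
  rw [hk, ← hkL] at hkx
  exact mul_right_cancel₀ hs.ne' hkx

noncomputable def liftPotential (h : ℂ → ℝ) (z : ℂ) : ℝ :=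
  if diagCoord z ≤ -2 / 3 then h (phiInv 1 z)
  else if 2 / 3 ≤ diagCoord z then h (phiInv 5 z) else 1 / 2

lemma liftPotential_of_le {h : ℂ → ℝ} {z : ℂ} (hz : diagCoord z ≤ -2 / 3) :
    liftPotential h z = h (phiInv 1 z) :=
  if_pos hz

lemma liftPotential_of_ge {h : ℂ → ℝ} {z : ℂ} (hz : 2 / 3 ≤ diagCoord z) :
    liftPotential h z = h (phiInv 5 z) := by
  rw [liftPotential, if_neg (by linarith), if_pos hz]

section Gn

variable {f : ℕ → ℕ}

lemma exists_phi_eq_of_mem_Gn_succ {n : ℕ} {z : ℂ} (hz : z ∈ Gn f (n + 1)) :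
    ∃ j ≤ 8, ∃ w ∈ Gn f n, phi j w = z := by
  rw [Gn] at hz
  split_ifs at hz <;>
  · simp only [mem_iUnion, mem_image, mem_insert_iff, mem_singleton_iff, exists_prop] at hz
    obtain ⟨j, hj, hz⟩ := hz
    exact ⟨j, by omega, hz⟩

lemma pt_mem_Gn {j : ℕ} (hj : j ∈ ({1, 3, 5, 7} : Set ℕ)) (n : ℕ) : pt j ∈ Gn f n := by
  simp only [mem_insert_iff, mem_singleton_iff] at hj
  induction n with
  | zero => rcases hj with rfl | rfl | rfl | rfl <;> simp [Gn]
  | succ n ih =>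
    rw [Gn]
    split_ifs <;>
    · simp only [mem_iUnion, mem_image, mem_insert_iff, mem_singleton_iff, exists_prop]
      exact ⟨j, by omega, pt j, ih, phi_pt_self j⟩

lemma mirror_mem_Gn {n : ℕ} {z : ℂ} (hz : z ∈ Gn f n) : mirror z ∈ Gn f n := by
  induction n generalizing z with
  | zero => rcases hz with rfl | rfl | rfl | rfl | rfl <;> simp [Gn, mirror_pt, mirrorIdx]
  | succ n ih =>
    rw [Gn] at hz ⊢
    split_ifs at hz ⊢ <;>
    · simp only [mem_iUnion, mem_image, mem_insert_iff, mem_singleton_iff, exists_prop] at hz ⊢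
      obtain ⟨j, hj, w, hw, rfl⟩ := hz
      refine ⟨mirrorIdx j, ?_, mirror w, ih hw, (mirror_phi j w).symm⟩
      rcases hj with rfl | rfl | rfl | rfl | rfl | rfl | rfl | rfl <;> simp [mirrorIdx]

lemma exists_int_diagCoord_mul_pow {n : ℕ} {z : ℂ} (hz : z ∈ Gn f n) :
    ∃ k : ℤ, diagCoord z * 3 ^ n = k := by
  induction n generalizing z with
  | zero =>
    rcases hz with rfl | rfl | rfl | rfl | rfl
    exacts [⟨0, by norm_num [diagCoord, pt]⟩, ⟨-1, by norm_num [diagCoord, pt]⟩,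
      ⟨0, by norm_num [diagCoord, pt]⟩, ⟨1, by norm_num [diagCoord, pt]⟩,
      ⟨0, by norm_num [diagCoord, pt]⟩]
  | succ n ih =>
    obtain ⟨j, -, w, hw, rfl⟩ := exists_phi_eq_of_mem_Gn_succ hz
    obtain ⟨k, hk⟩ := ih hw
    obtain ⟨m, hm⟩ := exists_int_two_mul_diagCoord_pt j
    refine ⟨k + m * 3 ^ n, ?_⟩
    rw [diagCoord_phi]
    push_cast
    linear_combination hk + 3 ^ n * hm

lemma eq_pt_one_of_diagCoord_le {n : ℕ} {z : ℂ} (hz : z ∈ Gn f n) (h : diagCoord z ≤ -1) :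
    z = pt 1 := by
  induction n generalizing z with
  | zero =>
    rcases hz with rfl | rfl | rfl | rfl | rfl <;> first | rfl | norm_num [diagCoord, pt] at h
  | succ n ih =>
    obtain ⟨j, hj, w, hw, rfl⟩ := exists_phi_eq_of_mem_Gn_succ hz
    have hw_ge : -1 ≤ diagCoord w := by
      by_contra! hlt
      have := ih hw hlt.le
      rw [this, diagCoord_pt_one] at hlt
      exact lt_irrefl _ hlt
    rw [diagCoord_phi] at h
    have hj1 : j = 1 := by
      have hpt : diagCoord (pt j) ≤ -1 := by linarith
      interval_cases j <;> first | rfl | norm_num [diagCoord, pt] at hpt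
    subst hj1
    rw [diagCoord_pt_one] at h
    rw [ih hw (by linarith), phi_pt_self]

lemma neg_one_le_diagCoord {n : ℕ} {z : ℂ} (hz : z ∈ Gn f n) : -1 ≤ diagCoord z := by
  by_contra! hlt
  rw [eq_pt_one_of_diagCoord_le hz hlt.le, diagCoord_pt_one] at hlt
  exact lt_irrefl _ hlt

lemma mapsTo_phiInv_one (n : ℕ) :
    MapsTo (phiInv 1) (Gn f (n + 1) ∩ {z | diagCoord z ≤ -2 / 3})
      (Gn f n ∩ {z | diagCoord z ≤ 0}) := by
  rintro z ⟨hz, hd⟩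
  refine ⟨?_, by simp only [mem_ofPred_eq, diagCoord_phiInv, diagCoord_pt_one]; linarith [hd.out]⟩
  obtain ⟨j, hj, w, hw, rfl⟩ := exists_phi_eq_of_mem_Gn_succ hz
  have hw_ge := neg_one_le_diagCoord hw
  replace hd : diagCoord w / 3 + 2 * diagCoord (pt j) / 3 ≤ -2 / 3 := diagCoord_phi j w ▸ hd
  have hw1 : diagCoord w ≤ -1 → w = pt 1 := eq_pt_one_of_diagCoord_le hw
  have key : j = 1 ∨ (j = 2 ∨ j = 8) ∧ w = pt 1 := by
    generalize diagCoord w = t at hd hw_ge hw1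
    interval_cases j <;> norm_num [diagCoord, pt] at hd ⊢ <;>
      first | linarith | exact hw1 (by linarith)
  rcases key with rfl | ⟨rfl | rfl, rfl⟩
  · rwa [phiInv_phi]
  · rw [show phiInv 1 (phi 2 (pt 1)) = pt 3 by simp [phiInv, phi, pt]; ring]
    exact pt_mem_Gn (by simp) n
  · rw [show phiInv 1 (phi 8 (pt 1)) = pt 7 by simp [phiInv, phi, pt]; ring]
    exact pt_mem_Gn (by simp) n

lemma mapsTo_phiInv_five (n : ℕ) :
    MapsTo (phiInv 5) (Gn f (n + 1) ∩ {z | 2 / 3 ≤ diagCoord z})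
      (Gn f n ∩ {z | 0 ≤ diagCoord z}) := by
  rintro z ⟨hz, hd⟩
  have hd' : diagCoord (mirror z) ≤ -2 / 3 := by rw [diagCoord_mirror]; linarith [hd.out]
  obtain ⟨hG, hle⟩ := mapsTo_phiInv_one n ⟨mirror_mem_Gn hz, hd'⟩
  have hmirror : mirror (phiInv 1 (mirror z)) = phiInv 5 z := by
    rw [mirror_phiInv, mirror_mirror]
    rfl
  rw [← hmirror]
  refine ⟨mirror_mem_Gn hG, ?_⟩
  simp only [mem_ofPred_eq, diagCoord_mirror]
  linarith [hle.out]

lemma mapsTo_mirror_En (n : ℕ) : MapsTo (Prod.map mirror mirror) (En f n) (En f n) :=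
  fun _ ⟨h1, h2, hd⟩ => ⟨mirror_mem_Gn h1, mirror_mem_Gn h2, (norm_mirror_sub _ _).trans hd⟩

lemma abs_diagCoord_sub_le_of_mem_En {m : ℕ} {e : ℂ × ℂ} (he : e ∈ En f m) :
    |diagCoord e.1 - diagCoord e.2| ≤ (3 ^ m)⁻¹ :=
  calc |diagCoord e.1 - diagCoord e.2| ≤ √2 * ‖e.1 - e.2‖ := abs_diagCoord_sub_le _ _
    _ = (3 ^ m)⁻¹ := by rw [he.2.2, zpow_neg, zpow_natCast]; field_simp

lemma mapsTo_En_succ {T : ℂ → ℂ} (hT : ∀ a b, ‖T a - T b‖ = 3 * ‖a - b‖) {n : ℕ} {S S' : Set ℂ}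
    (hG : MapsTo T (Gn f (n + 1) ∩ S) (Gn f n ∩ S')) :
    MapsTo (Prod.map T T) (En f (n + 1) ∩ S ×ˢ S) (En f n ∩ S' ×ˢ S') := by
  rintro e ⟨⟨h1, h2, hd⟩, hS1, hS2⟩
  obtain ⟨hG1, hS1'⟩ := hG ⟨h1, hS1⟩
  obtain ⟨hG2, hS2'⟩ := hG ⟨h2, hS2⟩
  refine ⟨⟨hG1, hG2, ?_⟩, hS1', hS2'⟩
  rw [Prod.map_fst, Prod.map_snd, hT, hd, zpow_neg, zpow_neg, zpow_natCast, zpow_natCast,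
    pow_succ]
  field_simp

/-- The endpoints of a level-`(n+1)` edge lie on equal or adjacent lines `diagCoord ∈ 3^-(n+1) ℤ`,
so an edge leaving `{diagCoord ≤ -2/3}` starts exactly on its boundary, where `liftPotential` is
`1/2` (and likewise for `{2/3 ≤ diagCoord}`). -/
lemma liftPotential_eq_half {h : ℂ → ℝ} (hmid : ∀ z, diagCoord z = 0 → h z = 1 / 2) {n : ℕ}
    {z y : ℂ} (hz : z ∈ Gn f (n + 1)) (hy : y ∈ Gn f (n + 1))
    (hzy : |diagCoord z - diagCoord y| ≤ (3 ^ (n + 1))⁻¹)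
    (hlow : ¬(diagCoord z ≤ -2 / 3 ∧ diagCoord y ≤ -2 / 3))
    (hhigh : ¬(2 / 3 ≤ diagCoord z ∧ 2 / 3 ≤ diagCoord y)) :
    liftPotential h z = 1 / 2 := by
  have hs : (0 : ℝ) < 3 ^ (n + 1) := by positivity
  obtain ⟨kz, hkz⟩ := exists_int_diagCoord_mul_pow hz
  obtain ⟨ky, hky⟩ := exists_int_diagCoord_mul_pow hy
  obtain ⟨hzy₁, hzy₂⟩ := abs_sub_le_iff.mp hzy
  by_cases h1 : diagCoord z ≤ -2 / 3
  · have hb : diagCoord z = -2 / 3 :=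
      eq_of_le_of_lt_of_sub_le_of_int hs ⟨kz, hkz⟩ ⟨ky, hky⟩ ⟨-(2 * 3 ^ n), by push_cast; ring⟩
        h1 (not_le.mp fun h2 => hlow ⟨h1, h2⟩) (by linarith)
    rw [liftPotential_of_le h1]
    exact hmid _ (by rw [diagCoord_phiInv, hb, diagCoord_pt_one]; ring)
  by_cases h2 : 2 / 3 ≤ diagCoord z
  · have hb : -diagCoord z = -(2 / 3) :=
      eq_of_le_of_lt_of_sub_le_of_int hs ⟨-kz, by push_cast; linarith⟩ ⟨-ky, by push_cast; linarith⟩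
        ⟨-(2 * 3 ^ n), by push_cast; ring⟩ (by linarith)
        (neg_lt_neg (not_le.mp fun h3 => hhigh ⟨h2, h3⟩)) (by linarith)
    rw [liftPotential_of_ge h2]
    exact hmid _ (by rw [diagCoord_phiInv, neg_inj.mp hb, diagCoord_pt_five]; ring)
  rw [liftPotential, if_neg h1, if_neg h2]

lemma edgeEnergy_liftPotential_le {h : ℂ → ℝ}
    (hmid : ∀ z, diagCoord z = 0 → h z = 1 / 2) (n : ℕ) :
    edgeEnergy (En f (n + 1)) (liftPotential h) ≤ edgeEnergy (En f n) h := by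
  set low : Set ℂ := {z | diagCoord z ≤ -2 / 3}
  set high : Set ℂ := {z | 2 / 3 ≤ diagCoord z}
  have hflat : ∀ e ∈ En f (n + 1), e ∉ low ×ˢ low ∪ high ×ˢ high →
      liftPotential h e.1 = liftPotential h e.2 := by
    intro e ⟨h1, h2, hd⟩ he
    simp only [mem_union, mem_prod, not_or] at he
    have hgap := abs_diagCoord_sub_le_of_mem_En ⟨h1, h2, hd⟩
    rw [liftPotential_eq_half hmid h1 h2 hgap he.1 he.2,
      liftPotential_eq_half hmid h2 h1 (abs_sub_comm (diagCoord e.1) _ ▸ hgap)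
        (fun h' => he.1 h'.symm) (fun h' => he.2 h'.symm)]
  have hlow : edgeEnergy (En f (n + 1) ∩ low ×ˢ low) (liftPotential h) =
      edgeEnergy (En f (n + 1) ∩ low ×ˢ low) (h ∘ phiInv 1) :=
    edgeEnergy_congr fun e ⟨_, h1, h2⟩ => by
      rw [liftPotential_of_le h1, liftPotential_of_le h2, Function.comp_apply, Function.comp_apply]
  have hhigh : edgeEnergy (En f (n + 1) ∩ high ×ˢ high) (liftPotential h) =
      edgeEnergy (En f (n + 1) ∩ high ×ˢ high) (h ∘ phiInv 5) :=
    edgeEnergy_congr fun e ⟨_, h1, h2⟩ => by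
      rw [liftPotential_of_ge h1, liftPotential_of_ge h2, Function.comp_apply, Function.comp_apply]
  calc edgeEnergy (En f (n + 1)) (liftPotential h)
      = edgeEnergy (En f (n + 1) ∩ (low ×ˢ low ∪ high ×ˢ high)) (liftPotential h) :=
        (edgeEnergy_inter_of_flat _ hflat).symm
    _ ≤ edgeEnergy (En f (n + 1) ∩ low ×ˢ low) (liftPotential h) +
          edgeEnergy (En f (n + 1) ∩ high ×ˢ high) (liftPotential h) := by
        rw [inter_union_distrib_left]
        exact edgeEnergy_union_le _ _ _
    _ ≤ edgeEnergy (En f n ∩ {z | diagCoord z ≤ 0} ×ˢ {z | diagCoord z ≤ 0}) h +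
          edgeEnergy (En f n ∩ {z | 0 ≤ diagCoord z} ×ˢ {z | 0 ≤ diagCoord z}) h := by
        rw [hlow, hhigh]
        gcongr
        · exact edgeEnergy_comp_le (phiInv_injective 1)
            (mapsTo_En_succ (norm_phiInv_sub 1) (mapsTo_phiInv_one n)) h
        · exact edgeEnergy_comp_le (phiInv_injective 5)
            (mapsTo_En_succ (norm_phiInv_sub 5) (mapsTo_phiInv_five n)) h
    _ ≤ edgeEnergy (En f n) h := edgeEnergy_inter_add_inter_le fun e ⟨⟨_, h1, h2⟩, h1', h2'⟩ => by
        rw [hmid _ (le_antisymm h1 h1'), hmid _ (le_antisymm h2 h2')]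

end Gn

theorem stmt_12_general (f : ℕ → ℕ) (n : ℕ) :
    edgeRes (En f n) {pt 1} {pt 5} ≤ edgeRes (En f (n + 1)) {pt 1} {pt 5} := by
  refine edgeRes_le_edgeRes fun h h1 h5 => ?_
  set hs : ℂ → ℝ := fun z => (h z + (1 - h (mirror z))) / 2
  have hmid : ∀ z, diagCoord z = 0 → hs z = 1 / 2 := fun z hz => by
    simp only [hs, mirror_eq_self hz]
    ring
  have hs1 : hs (pt 1) = 1 := by
    simp only [hs, mirror_pt 1, h1 _ rfl, h5 (pt (mirrorIdx 1)) rfl]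
    norm_num
  have hs5 : hs (pt 5) = 0 := by
    simp only [hs, mirror_pt 5, h5 _ rfl, h1 (pt (mirrorIdx 5)) rfl]
    norm_num
  refine ⟨liftPotential hs, ?_, ?_, ?_⟩
  · rintro a rfl
    rw [liftPotential_of_le (by norm_num [diagCoord_pt_one]), phiInv_pt_self, hs1]
  · rintro b rfl
    rw [liftPotential_of_ge (by norm_num [diagCoord_pt_five]), phiInv_pt_self, hs5]
  · exact (edgeEnergy_liftPotential_le hmid n).trans
      (edgeEnergy_symmetrize_le mirror_injective (mapsTo_mirror_En n) 1 h)

/-- In the graphs `(G_n(f), E_n(f))` with simple weights, the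
corner-to-corner effective resistance is monotone in `n`:
`R_{(G_n(f),E_n(f))}(p₁, p₅) ≤ R_{(G_{n+1}(f),E_{n+1}(f))}(p₁, p₅)` for every `n ≥ 0`
and every `f : ℕ → {0,1}`. -/
theorem stmt_12 (f : ℕ → ℕ) (hf : ∀ n, f n = 0 ∨ f n = 1) (n : ℕ) :
    edgeRes (En f n) {pt 1} {pt 5} ≤ edgeRes (En f (n + 1)) {pt 1} {pt 5} :=
  stmt_12_general f n
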